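/- arXiv:1605.06981 — 6 statements merged into one kernel-verified Lean document; each statement's English description precedes it below -/
import Mathlib

section
/- Let z, w ∈ ℂ with z ≠ 0, and set x = w/z̄ and y = 2z². Then -2/((|x|²+1)²·|y|²) + Im(x̄·y) = -1/(2(|w|²+|z|²)²) + 2·Im(w̄·z). -/
open ComplexConjugate

theorem conj_div_conj_mul_two_sq {𝕜 : Type*} [RCLike 𝕜] {z : 𝕜} (w : 𝕜) (hz : z ≠ 0) :
    conj (w / conj z) * (2 * z ^ 2) = 2 * (conj w * z) := by
  rw [map_div₀, RCLike.conj_conj]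
  field_simp

theorem norm_div_conj_sq_add_one_sq_mul {𝕜 : Type*} [RCLike 𝕜] {z : 𝕜} (w : 𝕜) (hz : z ≠ 0) :
    (‖w / conj z‖ ^ 2 + 1) ^ 2 * ‖2 * z ^ 2‖ ^ 2 = 4 * (‖w‖ ^ 2 + ‖z‖ ^ 2) ^ 2 := by
  have hz' : ‖z‖ ≠ 0 := norm_ne_zero_iff.mpr hz
  rw [norm_div, RCLike.norm_conj, norm_mul, norm_pow, RCLike.norm_two]
  field_simp
  ring

/-- The Levi-Civita pull-back identity: with `x = w/z̄` and `y = 2z²`,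
`-2/((|x|²+1)²|y|²) + Im(x̄y) = -1/(2(|w|²+|z|²)²) + 2 Im(w̄z)`. -/
theorem leviCivita_pullback_hamiltonian (z w : ℂ) (hz : z ≠ 0) :
    -2 / ((‖w / (starRingEnd ℂ z)‖ ^ 2 + 1) ^ 2
        * ‖2 * z ^ 2‖ ^ 2)
      + ((starRingEnd ℂ (w / (starRingEnd ℂ z))) * (2 * z ^ 2)).im
    = -1 / (2 * (‖w‖ ^ 2 + ‖z‖ ^ 2) ^ 2)
      + 2 * ((starRingEnd ℂ w) * z).im := by
  rw [norm_div_conj_sq_add_one_sq_mul w hz, conj_div_conj_mul_two_sq w hz,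
    Complex.mul_im, Complex.re_ofNat, Complex.im_ofNat]
  -- `ring` can cancel `-2 / (4 * s ^ 2)` only while `s` is an atom, not an expanded sum
  generalize ‖w‖ ^ 2 + ‖z‖ ^ 2 = s
  ring
end

section
/- Let a, c ∈ ℝ satisfy 0 < a < 1 and c < -3/2, and set b = 1/(4a²) + c/2. Then f₃ := -4c³ + 28bc² - (88b² - 7a²)c + 96b³ - 15a²b satisfies f₃ = (12c²a⁴ - 2ca⁸ - 15a⁶ + 14ca² + 6)/(4a⁶), and f₃ > 0. -/
private lemma f3_key (u v : ℝ) (hu : 0 < u) (hu' : u < 1) (hv : 0 < v) :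
    24*v + 12*v^2 - 66*u*v - 24*u*v^2 + 48*u^2*v + 12*u^2*v^2 + 3*u^3 - 8*u^3*v
      + 3*u^4 + 2*u^4*v > 0 := by
  rcases le_or_gt (u^3-3*u^2+21*u-12) 0 with hp | hp
  · nlinarith [mul_nonneg (mul_nonneg (neg_nonneg.2 hp) (sub_pos.2 hu').le) hv.le,
      mul_pos (mul_pos hu hu) hu, sq_nonneg ((1-u)*v)]
  · have hA : 36*u^3*(1+u) - (u^3-3*u^2+21*u-12)^2 > 0 := by
      nlinarith [sq_nonneg (u-1), sq_nonneg (u^2-1), mul_pos hu hu, sq_nonneg (u*(1-u)),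
        mul_nonneg hp.le (sq_nonneg (1-u)), mul_nonneg hp.le hu.le, mul_nonneg hp.le hp.le]
    nlinarith [sq_nonneg (12*(1-u)*v - (u^3-3*u^2+21*u-12)), hA]

private lemma f3_num_pos (a c : ℝ) (ha : 0 < a) (ha' : a < 1) (hc : c < -3/2) :
    12 * c ^ 2 * a ^ 4 - 2 * c * a ^ 8 - 15 * a ^ 6 + 14 * c * a ^ 2 + 6 > 0 := by
  have hu : 0 < 1 - a^2 := by nlinarith
  have hu' : 1 - a^2 < 1 := by nlinarith
  have hv : 0 < -c - 3/2 := by linarith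
  have h := f3_key (1 - a^2) (-c - 3/2) hu hu' hv
  nlinarith [h]

/-- For `0 < a < 1`, `c < -3/2` and `b = 1/(4a²) + c/2`, the factor
`f₃ = -4c³ + 28bc² - (88b² - 7a²)c + 96b³ - 15a²b` equals
`(12c²a⁴ - 2ca⁸ - 15a⁶ + 14ca² + 6)/(4a⁶)` and is positive. -/
theorem f3_formula_and_pos (a c : ℝ) (ha : 0 < a) (ha' : a < 1)
    (hc : c < -3/2) :
    (-4 * c ^ 3 + 28 * (1 / (4 * a ^ 2) + c / 2) * c ^ 2
        - (88 * (1 / (4 * a ^ 2) + c / 2) ^ 2 - 7 * a ^ 2) * c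
        + 96 * (1 / (4 * a ^ 2) + c / 2) ^ 3
        - 15 * a ^ 2 * (1 / (4 * a ^ 2) + c / 2)
      = (12 * c ^ 2 * a ^ 4 - 2 * c * a ^ 8 - 15 * a ^ 6 + 14 * c * a ^ 2 + 6)
        / (4 * a ^ 6)) ∧
    -4 * c ^ 3 + 28 * (1 / (4 * a ^ 2) + c / 2) * c ^ 2
        - (88 * (1 / (4 * a ^ 2) + c / 2) ^ 2 - 7 * a ^ 2) * c
        + 96 * (1 / (4 * a ^ 2) + c / 2) ^ 3
        - 15 * a ^ 2 * (1 / (4 * a ^ 2) + c / 2) > 0 := by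
  have ha0 : a ≠ 0 := ne_of_gt ha
  have heq : -4 * c ^ 3 + 28 * (1 / (4 * a ^ 2) + c / 2) * c ^ 2
        - (88 * (1 / (4 * a ^ 2) + c / 2) ^ 2 - 7 * a ^ 2) * c
        + 96 * (1 / (4 * a ^ 2) + c / 2) ^ 3
        - 15 * a ^ 2 * (1 / (4 * a ^ 2) + c / 2)
      = (12 * c ^ 2 * a ^ 4 - 2 * c * a ^ 8 - 15 * a ^ 6 + 14 * c * a ^ 2 + 6)
        / (4 * a ^ 6) := by
    field_simp
    ring
  refine ⟨heq, ?_⟩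
  rw [heq]
  exact div_pos (f3_num_pos a c ha ha' hc) (by positivity)
end

section
/- Let n ≥ 1 and let q, p ∈ ℝⁿ with q ≠ 0 and K(q,p) := ‖p‖²/2 - 1/‖q‖ < 0. Define u = (√(-2K(q,p))·‖q‖·p, ‖p‖²‖q‖ - 1) ∈ ℝⁿ × ℝ = ℝⁿ⁺¹ and v = (-q/‖q‖ + ⟨q,p⟩·p, -√(-2K(q,p))·⟨q,p⟩) ∈ ℝⁿ⁺¹. Then ‖u‖ = 1, ‖v‖ = 1, and ⟨u, v⟩ = 0, i.e., u and v are orthonormal vectors in ℝⁿ⁺¹. -/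
/-!
Write `r = ‖q‖`, `s = ‖p‖`, `c = ⟪q, p⟫` and `a = √(-2K)`. Negativity of the energy is used only
through `a² = 2/r - s²`; with it `‖u‖² = a²r²s² + (s²r - 1)² = 1` and
`‖v‖² = (1 - 2c²/r + c²s²) + a²c² = 1`, while `⟪u, v⟫ = ar(c s² - c/r) - ac(s²r - 1) = 0` holds
for every scalar `a`.
-/

open RealInnerProductSpace

section LigonSchaaf

variable {E : Type*} [NormedAddCommGroup E]

theorem WithLp.norm_equiv_symm_prod_eq_one {x : E} {t : ℝ} (h : ‖x‖ ^ 2 + t ^ 2 = 1) :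
    ‖(WithLp.equiv 2 (E × ℝ)).symm (x, t)‖ = 1 := by
  rw [← pow_eq_one_iff_of_nonneg (norm_nonneg _) two_ne_zero, WithLp.prod_norm_sq_eq_of_L2]
  simpa only [WithLp.equiv_symm_apply, WithLp.toLp_fst, WithLp.toLp_snd, Real.norm_eq_abs, sq_abs]
    using h

theorem sq_sqrt_neg_two_mul_kepler {q p : E} (hK : ‖p‖ ^ 2 / 2 - 1 / ‖q‖ < 0) :
    √(-2 * (‖p‖ ^ 2 / 2 - 1 / ‖q‖)) ^ 2 = 2 / ‖q‖ - ‖p‖ ^ 2 := by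
  rw [Real.sq_sqrt (by linarith)]
  ring

variable [InnerProductSpace ℝ E]

theorem WithLp.inner_equiv_symm_prod (x y : E) (t τ : ℝ) :
    ⟪(WithLp.equiv 2 (E × ℝ)).symm (x, t), (WithLp.equiv 2 (E × ℝ)).symm (y, τ)⟫ =
      ⟪x, y⟫ + t * τ := by
  rw [WithLp.prod_inner_apply]
  simp only [WithLp.equiv_symm_apply, WithLp.ofLp_toLp, RCLike.inner_apply, conj_trivial, mul_comm]

variable {q p : E} (hq : q ≠ 0)
include hq

theorem ligonSchaaf_u_norm_sq {a : ℝ} (ha : a ^ 2 = 2 / ‖q‖ - ‖p‖ ^ 2) :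
    ‖(a * ‖q‖) • p‖ ^ 2 + (‖p‖ ^ 2 * ‖q‖ - 1) ^ 2 = 1 := by
  have hr : ‖q‖ ≠ 0 := norm_ne_zero_iff.mpr hq
  rw [norm_smul, mul_pow, Real.norm_eq_abs, sq_abs, mul_pow, ha]
  field_simp
  ring

theorem norm_sq_neg_inv_norm_smul_add_inner_smul :
    ‖-(‖q‖⁻¹ • q) + ⟪q, p⟫ • p‖ ^ 2 = 1 - 2 * ⟪q, p⟫ ^ 2 / ‖q‖ + ⟪q, p⟫ ^ 2 * ‖p‖ ^ 2 := by
  have hr : ‖q‖ ≠ 0 := norm_ne_zero_iff.mpr hq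
  rw [norm_add_sq_real, norm_neg, inner_neg_left, real_inner_smul_left, real_inner_smul_right,
    norm_smul, norm_smul, norm_inv, norm_norm, Real.norm_eq_abs, mul_pow, mul_pow, sq_abs]
  field_simp
  ring

theorem ligonSchaaf_v_norm_sq {a : ℝ} (ha : a ^ 2 = 2 / ‖q‖ - ‖p‖ ^ 2) :
    ‖-(‖q‖⁻¹ • q) + ⟪q, p⟫ • p‖ ^ 2 + (-(a * ⟪q, p⟫)) ^ 2 = 1 := by
  rw [norm_sq_neg_inv_norm_smul_add_inner_smul hq, neg_sq, mul_pow, ha]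
  ring

theorem ligonSchaaf_inner_u_v (a : ℝ) :
    ⟪(a * ‖q‖) • p, -(‖q‖⁻¹ • q) + ⟪q, p⟫ • p⟫ + (‖p‖ ^ 2 * ‖q‖ - 1) * -(a * ⟪q, p⟫) = 0 := by
  have hr : ‖q‖ ≠ 0 := norm_ne_zero_iff.mpr hq
  simp only [inner_add_right, inner_neg_right, real_inner_smul_left, real_inner_smul_right,
    real_inner_self_eq_norm_sq, real_inner_comm q p]
  field_simp
  ring

end LigonSchaaf

theorem ligonSchaaf_uv_orthonormal_general (n : ℕ)
    (q p : EuclideanSpace ℝ (Fin n)) (hq : q ≠ 0)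
    (hK : ‖p‖ ^ 2 / 2 - 1 / ‖q‖ < 0) :
    let K : ℝ := ‖p‖ ^ 2 / 2 - 1 / ‖q‖
    let u : WithLp 2 (EuclideanSpace ℝ (Fin n) × ℝ) :=
      (WithLp.equiv 2 (EuclideanSpace ℝ (Fin n) × ℝ)).symm
        ((Real.sqrt (-2 * K) * ‖q‖) • p, ‖p‖ ^ 2 * ‖q‖ - 1)
    let v : WithLp 2 (EuclideanSpace ℝ (Fin n) × ℝ) :=
      (WithLp.equiv 2 (EuclideanSpace ℝ (Fin n) × ℝ)).symm
        (-(‖q‖⁻¹ • q) + ⟪q, p⟫ • p, -(Real.sqrt (-2 * K) * ⟪q, p⟫))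
    ‖u‖ = 1 ∧ ‖v‖ = 1 ∧ ⟪u, v⟫ = 0 := by
  intro K u v
  have ha := sq_sqrt_neg_two_mul_kepler hK
  exact ⟨WithLp.norm_equiv_symm_prod_eq_one (ligonSchaaf_u_norm_sq hq ha),
    WithLp.norm_equiv_symm_prod_eq_one (ligonSchaaf_v_norm_sq hq ha),
    (WithLp.inner_equiv_symm_prod _ _ _ _).trans (ligonSchaaf_inner_u_v hq _)⟩

/-- The Ligon-Schaaf vectors `u` and `v` are orthonormal in `ℝⁿ⁺¹`. -/
theorem ligonSchaaf_uv_orthonormal (n : ℕ) (hn : 1 ≤ n)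
    (q p : EuclideanSpace ℝ (Fin n)) (hq : q ≠ 0)
    (hK : ‖p‖ ^ 2 / 2 - 1 / ‖q‖ < 0) :
    let K : ℝ := ‖p‖ ^ 2 / 2 - 1 / ‖q‖
    let u : WithLp 2 (EuclideanSpace ℝ (Fin n) × ℝ) :=
      (WithLp.equiv 2 (EuclideanSpace ℝ (Fin n) × ℝ)).symm
        ((Real.sqrt (-2 * K) * ‖q‖) • p, ‖p‖ ^ 2 * ‖q‖ - 1)
    let v : WithLp 2 (EuclideanSpace ℝ (Fin n) × ℝ) :=
      (WithLp.equiv 2 (EuclideanSpace ℝ (Fin n) × ℝ)).symm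
        (-(‖q‖⁻¹ • q) + ⟪q, p⟫ • p, -(Real.sqrt (-2 * K) * ⟪q, p⟫))
    ‖u‖ = 1 ∧ ‖v‖ = 1 ∧ ⟪u, v⟫ = 0 :=
  ligonSchaaf_uv_orthonormal_general n q p hq hK
end

section
/- Let n ≥ 1 and let q, p ∈ ℝⁿ with q ≠ 0 and K(q,p) := ‖p‖²/2 - 1/‖q‖ < 0. Define φ = -√(-2K(q,p))·⟨q,p⟩, u = (√(-2K(q,p))·‖q‖·p, ‖p‖²‖q‖ - 1) ∈ ℝⁿ⁺¹, v = (-q/‖q‖ + ⟨q,p⟩·p, -√(-2K(q,p))·⟨q,p⟩) ∈ ℝⁿ⁺¹, and set r = (cos φ)·u + (sin φ)·v and s = (1/√(-2K(q,p)))·(-(sin φ)·u + (cos φ)·v). Then ‖r‖ = 1, ⟨r, s⟩ = 0, and ‖s‖² = -1/(2K(q,p)); in particular -1/(2‖s‖²) = K(q,p). -/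
open RealInnerProductSpace

/-!
With `ω = √(-2K)`, the energy relation `ω² = 2/‖q‖ - ‖p‖²` makes `u` and `v` orthonormal in
`ℝⁿ⁺¹`. The pair `(r, ω s)` is the rotation of `(u, v)` by the angle `φ`, hence orthonormal too,
so `‖r‖ = 1`, `⟪r, s⟫ = 0` and `‖s‖ = 1/ω`.
-/

section Rotation

variable {F : Type*} [NormedAddCommGroup F] [InnerProductSpace ℝ F] {u v : F}

theorem norm_smul_add_smul_sq_of_orthonormal (hu : ‖u‖ = 1) (hv : ‖v‖ = 1) (huv : ⟪u, v⟫ = 0)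
    (a b : ℝ) : ‖a • u + b • v‖ ^ 2 = a ^ 2 + b ^ 2 := by
  have h : ⟪a • u, b • v⟫ = 0 := by simp only [real_inner_smul_left, real_inner_smul_right, huv,
    mul_zero]
  rw [sq, norm_add_sq_eq_norm_sq_add_norm_sq_real h, norm_smul, norm_smul, hu, hv]
  simp only [Real.norm_eq_abs, mul_one, abs_mul_abs_self, sq]

theorem norm_cos_smul_add_sin_smul (hu : ‖u‖ = 1) (hv : ‖v‖ = 1) (huv : ⟪u, v⟫ = 0) (θ : ℝ) :
    ‖Real.cos θ • u + Real.sin θ • v‖ = 1 := by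
  rw [← pow_eq_one_iff_of_nonneg (norm_nonneg _) two_ne_zero,
    norm_smul_add_smul_sq_of_orthonormal hu hv huv, Real.cos_sq_add_sin_sq]

theorem norm_neg_sin_smul_add_cos_smul (hu : ‖u‖ = 1) (hv : ‖v‖ = 1) (huv : ⟪u, v⟫ = 0) (θ : ℝ) :
    ‖-(Real.sin θ • u) + Real.cos θ • v‖ = 1 := by
  rw [← neg_smul, ← pow_eq_one_iff_of_nonneg (norm_nonneg _) two_ne_zero,
    norm_smul_add_smul_sq_of_orthonormal hu hv huv, neg_sq, Real.sin_sq_add_cos_sq]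

theorem inner_cos_smul_add_sin_smul_neg_sin_smul_add_cos_smul (hu : ‖u‖ = 1) (hv : ‖v‖ = 1)
    (huv : ⟪u, v⟫ = 0) (θ : ℝ) :
    ⟪Real.cos θ • u + Real.sin θ • v, -(Real.sin θ • u) + Real.cos θ • v⟫ = 0 := by
  simp only [inner_add_left, inner_add_right, inner_neg_right, real_inner_smul_left,
    real_inner_smul_right, real_inner_self_eq_norm_sq, hu, hv, huv, real_inner_comm u v]
  ring

end Rotation

section LigonSchaaf

variable {E : Type*} [NormedAddCommGroup E] [InnerProductSpace ℝ E] {q p : E} {ω : ℝ}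

noncomputable def ligonSchaafU (ω : ℝ) (q p : E) : WithLp 2 (E × ℝ) :=
  (WithLp.equiv 2 (E × ℝ)).symm ((ω * ‖q‖) • p, ‖p‖ ^ 2 * ‖q‖ - 1)

noncomputable def ligonSchaafV (ω : ℝ) (q p : E) : WithLp 2 (E × ℝ) :=
  (WithLp.equiv 2 (E × ℝ)).symm (-(‖q‖⁻¹ • q) + ⟪q, p⟫ • p, -(ω * ⟪q, p⟫))

theorem norm_ligonSchaafU (hq : q ≠ 0) (hω : ω ^ 2 = -2 * (‖p‖ ^ 2 / 2 - 1 / ‖q‖)) :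
    ‖ligonSchaafU ω q p‖ = 1 := by
  have hq' : ‖q‖ ≠ 0 := norm_ne_zero_iff.mpr hq
  rw [norm_eq_sqrt_real_inner, Real.sqrt_eq_one]
  simp only [ligonSchaafU, WithLp.prod_inner_apply, WithLp.equiv_symm_apply,
    real_inner_smul_left, real_inner_smul_right, RCLike.inner_apply, conj_trivial]
  rw [real_inner_self_eq_norm_sq]
  field_simp at hω
  linear_combination (‖q‖ * ‖p‖ ^ 2) * hω

theorem norm_ligonSchaafV (hq : q ≠ 0) (hω : ω ^ 2 = -2 * (‖p‖ ^ 2 / 2 - 1 / ‖q‖)) :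
    ‖ligonSchaafV ω q p‖ = 1 := by
  have hq' : ‖q‖ ≠ 0 := norm_ne_zero_iff.mpr hq
  rw [norm_eq_sqrt_real_inner, Real.sqrt_eq_one]
  simp only [ligonSchaafV, WithLp.prod_inner_apply, WithLp.equiv_symm_apply,
    inner_add_left, inner_add_right, inner_neg_left, inner_neg_right,
    real_inner_smul_left, real_inner_smul_right, real_inner_comm q p,
    RCLike.inner_apply, conj_trivial]
  simp only [real_inner_self_eq_norm_sq]
  field_simp at hω ⊢
  linear_combination ⟪q, p⟫ ^ 2 * hω

theorem inner_ligonSchaafU_ligonSchaafV (hq : q ≠ 0) :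
    ⟪ligonSchaafU ω q p, ligonSchaafV ω q p⟫ = 0 := by
  have hq' : ‖q‖ ≠ 0 := norm_ne_zero_iff.mpr hq
  simp only [ligonSchaafU, ligonSchaafV, WithLp.prod_inner_apply, WithLp.equiv_symm_apply,
    inner_add_right, inner_neg_right, real_inner_smul_left,
    real_inner_smul_right, real_inner_self_eq_norm_sq, real_inner_comm q p,
    RCLike.inner_apply, conj_trivial]
  field_simp
  ring

end LigonSchaaf

theorem ligonSchaaf_delaunay_general (n : ℕ)
    (q p : EuclideanSpace ℝ (Fin n)) (hq : q ≠ 0)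
    (hK : ‖p‖ ^ 2 / 2 - 1 / ‖q‖ < 0) :
    let K : ℝ := ‖p‖ ^ 2 / 2 - 1 / ‖q‖
    let φ : ℝ := -(Real.sqrt (-2 * K) * ⟪q, p⟫)
    let u : WithLp 2 (EuclideanSpace ℝ (Fin n) × ℝ) :=
      (WithLp.equiv 2 (EuclideanSpace ℝ (Fin n) × ℝ)).symm
        ((Real.sqrt (-2 * K) * ‖q‖) • p, ‖p‖ ^ 2 * ‖q‖ - 1)
    let v : WithLp 2 (EuclideanSpace ℝ (Fin n) × ℝ) :=
      (WithLp.equiv 2 (EuclideanSpace ℝ (Fin n) × ℝ)).symm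
        (-(‖q‖⁻¹ • q) + ⟪q, p⟫ • p, -(Real.sqrt (-2 * K) * ⟪q, p⟫))
    let r := Real.cos φ • u + Real.sin φ • v
    let s := (Real.sqrt (-2 * K))⁻¹ • (-(Real.sin φ • u) + Real.cos φ • v)
    ‖r‖ = 1 ∧ ⟪r, s⟫ = 0 ∧ ‖s‖ ^ 2 = -1 / (2 * K) ∧ -1 / (2 * ‖s‖ ^ 2) = K := by
  intro K φ u v r s
  have hK : K < 0 := hK
  set ω := Real.sqrt (-2 * K)
  have hω : ω ^ 2 = -2 * K := Real.sq_sqrt (by linarith)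
  have hω_pos : 0 < ω := Real.sqrt_pos.mpr (by linarith)
  have hu : ‖u‖ = 1 := norm_ligonSchaafU hq hω
  have hv : ‖v‖ = 1 := norm_ligonSchaafV hq hω
  have huv : ⟪u, v⟫ = 0 := inner_ligonSchaafU_ligonSchaafV hq
  have hs : ‖s‖ = ω⁻¹ := by
    rw [norm_smul, norm_neg_sin_smul_add_cos_smul hu hv huv, mul_one, Real.norm_eq_abs,
      abs_of_pos (inv_pos.mpr hω_pos)]
  have hs_sq : ‖s‖ ^ 2 = -1 / (2 * K) := by
    rw [hs, inv_pow, hω]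
    field_simp
  refine ⟨norm_cos_smul_add_sin_smul hu hv huv φ, ?_, hs_sq, ?_⟩
  · rw [real_inner_smul_right, inner_cos_smul_add_sin_smul_neg_sin_smul_add_cos_smul hu hv huv,
      mul_zero]
  · rw [hs_sq]
    field_simp [hK.ne]

/-- The Ligon-Schaaf map `(q,p) ↦ (r,s)` lands in `T*Sⁿ` and transforms the
Kepler Hamiltonian `K` into the Delaunay Hamiltonian `-1/(2‖s‖²)`. -/
theorem ligonSchaaf_delaunay (n : ℕ) (hn : 1 ≤ n)
    (q p : EuclideanSpace ℝ (Fin n)) (hq : q ≠ 0)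
    (hK : ‖p‖ ^ 2 / 2 - 1 / ‖q‖ < 0) :
    let K : ℝ := ‖p‖ ^ 2 / 2 - 1 / ‖q‖
    let φ : ℝ := -(Real.sqrt (-2 * K) * ⟪q, p⟫)
    let u : WithLp 2 (EuclideanSpace ℝ (Fin n) × ℝ) :=
      (WithLp.equiv 2 (EuclideanSpace ℝ (Fin n) × ℝ)).symm
        ((Real.sqrt (-2 * K) * ‖q‖) • p, ‖p‖ ^ 2 * ‖q‖ - 1)
    let v : WithLp 2 (EuclideanSpace ℝ (Fin n) × ℝ) :=
      (WithLp.equiv 2 (EuclideanSpace ℝ (Fin n) × ℝ)).symm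
        (-(‖q‖⁻¹ • q) + ⟪q, p⟫ • p, -(Real.sqrt (-2 * K) * ⟪q, p⟫))
    let r := Real.cos φ • u + Real.sin φ • v
    let s := (Real.sqrt (-2 * K))⁻¹ • (-(Real.sin φ • u) + Real.cos φ • v)
    ‖r‖ = 1 ∧ ⟪r, s⟫ = 0 ∧ ‖s‖ ^ 2 = -1 / (2 * K) ∧ -1 / (2 * ‖s‖ ^ 2) = K :=
  ligonSchaaf_delaunay_general n q p hq hK
end

section
/- Let q, p ∈ ℝ² with q ≠ 0 and K(q,p) := ‖p‖²/2 - 1/‖q‖ < 0. With φ = -√(-2K)·⟨q,p⟩, u = (√(-2K)·‖q‖·p, ‖p‖²‖q‖ - 1) ∈ ℝ³, v = (-q/‖q‖ + ⟨q,p⟩·p, -√(-2K)·⟨q,p⟩) ∈ ℝ³, r = (cos φ)·u + (sin φ)·v, and s = (1/√(-2K))·(-(sin φ)·u + (cos φ)·v), one has |r₁s₂ - r₂s₁| = |p₁q₂ - p₂q₁|. -/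
open RealInnerProductSpace

/-! The term `r₁s₂ - r₂s₁` is the `(1,2)` coordinate 2-form evaluated on `(r, s)`. Since `(r, √(-2K) s)`
is the rotation of `(u, v)` by the angle `φ`, the form takes the same value on it as on `(u, v)`, and on
`(u, v)` it is `-√(-2K) (p₁q₂ - p₂q₁)`: the `⟨q,p⟩ p` part of `v` drops out against the multiple of `p`
in `u`. -/

def coordWedge {ι : Type*} (i j : ι) (x y : EuclideanSpace ℝ ι) : ℝ :=
  x i * y j - x j * y i

theorem coordWedge_smul_add_smul {ι : Type*} (i j : ι) (x y : EuclideanSpace ℝ ι) (a b c d : ℝ) :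
    coordWedge i j (a • x + b • y) (c • x + d • y) = (a * d - b * c) * coordWedge i j x y := by
  simp only [coordWedge, PiLp.add_apply, PiLp.smul_apply, smul_eq_mul]
  ring

theorem coordWedge_ligonSchaaf (q p : EuclideanSpace ℝ (Fin 2)) (α n t w z : ℝ) (hn : n ≠ 0) :
    coordWedge 0 1 !₂[α * n * p 0, α * n * p 1, w]
        !₂[-(n⁻¹ * q 0) + t * p 0, -(n⁻¹ * q 1) + t * p 1, z] =
      -(α * (p 0 * q 1 - p 1 * q 0)) := by
  simp only [coordWedge, Matrix.cons_val_zero, Matrix.cons_val_one]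
  field_simp
  ring

/-- The planar Ligon-Schaaf map preserves the magnitude of the angular
momentum: `|r₁s₂ - r₂s₁| = |p₁q₂ - p₂q₁|`. -/
theorem ligonSchaaf_angularMomentum (q p : EuclideanSpace ℝ (Fin 2))
    (hq : q ≠ 0) (hK : ‖p‖ ^ 2 / 2 - 1 / ‖q‖ < 0) :
    let K : ℝ := ‖p‖ ^ 2 / 2 - 1 / ‖q‖
    let φ : ℝ := -(Real.sqrt (-2 * K) * ⟪q, p⟫)
    let u : EuclideanSpace ℝ (Fin 3) :=
      !₂[Real.sqrt (-2 * K) * ‖q‖ * p 0, Real.sqrt (-2 * K) * ‖q‖ * p 1,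
        ‖p‖ ^ 2 * ‖q‖ - 1]
    let v : EuclideanSpace ℝ (Fin 3) :=
      !₂[-(‖q‖⁻¹ * q 0) + ⟪q, p⟫ * p 0, -(‖q‖⁻¹ * q 1) + ⟪q, p⟫ * p 1,
        -(Real.sqrt (-2 * K) * ⟪q, p⟫)]
    let r := Real.cos φ • u + Real.sin φ • v
    let s := (Real.sqrt (-2 * K))⁻¹ • (-(Real.sin φ • u) + Real.cos φ • v)
    |r 0 * s 1 - r 1 * s 0| = |p 0 * q 1 - p 1 * q 0| := by
  intro K φ u v r s
  set α := Real.sqrt (-2 * K)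
  have hα : α ≠ 0 := (Real.sqrt_pos.2 (by linarith [show K < 0 from hK])).ne'
  have hs : s = (α⁻¹ * -Real.sin φ) • u + (α⁻¹ * Real.cos φ) • v := by
    simp only [s]
    module
  calc |r 0 * s 1 - r 1 * s 0|
      = |α⁻¹ * (Real.sin φ ^ 2 + Real.cos φ ^ 2) * coordWedge 0 1 u v| := by
        rw [← coordWedge, hs, coordWedge_smul_add_smul]
        ring_nf
    _ = |p 0 * q 1 - p 1 * q 0| := by
        rw [Real.sin_sq_add_cos_sq, mul_one,
          coordWedge_ligonSchaaf _ _ _ _ _ _ _ (norm_ne_zero_iff.2 hq), mul_neg,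
          inv_mul_cancel_left₀ hα, abs_neg]
end

section
/- Let c < -3/2 and define F : ℝ⁴ → ℝ by F(w₁,w₂,z₁,z₂) = -1 + 4(w₁z₂ - w₂z₁)(w₁²+w₂²+z₁²+z₂²)² - 2c(w₁²+w₂²+z₁²+z₂²)². If (w₁,w₂,z₁,z₂) ∈ ℝ⁴ satisfies 0 < w₁²+w₂²+z₁²+z₂² < 1 and F(w₁,w₂,z₁,z₂) = 0, then the gradient of F at (w₁,w₂,z₁,z₂) is nonzero; i.e., the bounded component of the level set F = 0 is a regular hypersurface. -/
/-!
Since `F + 1` is a sum of homogeneous terms of degrees 6 and 4, the derivative of `F` along the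
radial direction at `p` is `8 S² (3μ - c)` (Euler's identity), where `S = ‖p‖²` and
`μ = w₁z₂ - w₂z₁`. A vanishing gradient would force `3μ = c`; but `-2μ ≤ S < 1` gives
`3μ > -3/2 > c`.
-/

theorem HasGradientAt.hasDerivAt_comp_smul_one {E : Type*} [NormedAddCommGroup E]
    [InnerProductSpace ℝ E] [CompleteSpace E] {f : E → ℝ} {g p : E} (hf : HasGradientAt f g p) :
    HasDerivAt (fun t : ℝ => f (t • p)) (inner ℝ g p) 1 := by
  have hline : HasDerivAt (fun t : ℝ => t • p) p 1 := by
    simpa using (hasDerivAt_id (1 : ℝ)).smul_const p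
  rw [← hf.fderiv_apply]
  exact hf.differentiableAt.hasFDerivAt.comp_hasDerivAt_of_eq 1 hline (one_smul ℝ p).symm

namespace RotatingKepler

def sqNorm (q : EuclideanSpace ℝ (Fin 4)) : ℝ := q 0 ^ 2 + q 1 ^ 2 + q 2 ^ 2 + q 3 ^ 2

def angularMomentum (q : EuclideanSpace ℝ (Fin 4)) : ℝ := q 0 * q 3 - q 1 * q 2

def levelFunction (c : ℝ) (q : EuclideanSpace ℝ (Fin 4)) : ℝ :=
  -1 + 4 * angularMomentum q * sqNorm q ^ 2 - 2 * c * sqNorm q ^ 2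

theorem differentiable_levelFunction (c : ℝ) : Differentiable ℝ (levelFunction c) := by
  unfold levelFunction angularMomentum sqNorm
  fun_prop

theorem levelFunction_smul (c t : ℝ) (q : EuclideanSpace ℝ (Fin 4)) :
    levelFunction c (t • q) =
      -1 + 4 * angularMomentum q * sqNorm q ^ 2 * t ^ 6 - 2 * c * sqNorm q ^ 2 * t ^ 4 := by
  simp only [levelFunction, angularMomentum, sqNorm, PiLp.smul_apply, smul_eq_mul]
  ring

theorem hasDerivAt_levelFunction_smul_one (c : ℝ) (q : EuclideanSpace ℝ (Fin 4)) :
    HasDerivAt (fun t : ℝ => levelFunction c (t • q))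
      (8 * sqNorm q ^ 2 * (3 * angularMomentum q - c)) 1 := by
  simp only [levelFunction_smul]
  refine ((((hasDerivAt_pow 6 (1 : ℝ)).const_mul (4 * angularMomentum q * sqNorm q ^ 2)).const_add
    (-1)).sub ((hasDerivAt_pow 4 (1 : ℝ)).const_mul (2 * c * sqNorm q ^ 2))).congr_deriv ?_
  norm_num
  ring

theorem neg_two_mul_angularMomentum_le_sqNorm (q : EuclideanSpace ℝ (Fin 4)) :
    -2 * angularMomentum q ≤ sqNorm q := by
  unfold angularMomentum sqNorm
  nlinarith [sq_nonneg (q 0 + q 3), sq_nonneg (q 1 - q 2)]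

theorem lt_three_mul_angularMomentum {c : ℝ} {q : EuclideanSpace ℝ (Fin 4)} (hc : c ≤ -3 / 2)
    (hq : sqNorm q < 1) : c < 3 * angularMomentum q := by
  linarith [neg_two_mul_angularMomentum_le_sqNorm q]

end RotatingKepler

open RotatingKepler

theorem gradient_ne_zero_on_bounded_component_general (c : ℝ) (hc : c < -3/2)
    (p : EuclideanSpace ℝ (Fin 4))
    (h0 : 0 < p 0 ^ 2 + p 1 ^ 2 + p 2 ^ 2 + p 3 ^ 2)
    (h1 : p 0 ^ 2 + p 1 ^ 2 + p 2 ^ 2 + p 3 ^ 2 < 1) :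
    gradient (fun q : EuclideanSpace ℝ (Fin 4) =>
        -1 + 4 * (q 0 * q 3 - q 1 * q 2)
              * (q 0 ^ 2 + q 1 ^ 2 + q 2 ^ 2 + q 3 ^ 2) ^ 2
          - 2 * c * (q 0 ^ 2 + q 1 ^ 2 + q 2 ^ 2 + q 3 ^ 2) ^ 2) p ≠ 0 := by
  change gradient (levelFunction c) p ≠ 0
  intro hgrad
  have hradial := (differentiable_levelFunction c p).hasGradientAt.hasDerivAt_comp_smul_one
  rw [hgrad, inner_zero_left] at hradial
  have hzero := hradial.unique (hasDerivAt_levelFunction_smul_one c p)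
  have hpos : 0 < 8 * sqNorm p ^ 2 * (3 * angularMomentum p - c) :=
    mul_pos (by positivity) (sub_pos.2 (lt_three_mul_angularMomentum hc.le h1))
  exact hpos.ne hzero

/-- On the bounded component `0 < ‖(w,z)‖² < 1` of the level set `F = 0`,
with `c < -3/2`, the gradient of
`F(w₁,w₂,z₁,z₂) = -1 + 4(w₁z₂-w₂z₁)(w₁²+w₂²+z₁²+z₂²)² - 2c(w₁²+w₂²+z₁²+z₂²)²`
is nonzero. -/
theorem gradient_ne_zero_on_bounded_component (c : ℝ) (hc : c < -3/2)
    (p : EuclideanSpace ℝ (Fin 4))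
    (h0 : 0 < p 0 ^ 2 + p 1 ^ 2 + p 2 ^ 2 + p 3 ^ 2)
    (h1 : p 0 ^ 2 + p 1 ^ 2 + p 2 ^ 2 + p 3 ^ 2 < 1)
    (hF : -1 + 4 * (p 0 * p 3 - p 1 * p 2)
            * (p 0 ^ 2 + p 1 ^ 2 + p 2 ^ 2 + p 3 ^ 2) ^ 2
          - 2 * c * (p 0 ^ 2 + p 1 ^ 2 + p 2 ^ 2 + p 3 ^ 2) ^ 2 = 0) :
    gradient (fun q : EuclideanSpace ℝ (Fin 4) =>
        -1 + 4 * (q 0 * q 3 - q 1 * q 2)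
              * (q 0 ^ 2 + q 1 ^ 2 + q 2 ^ 2 + q 3 ^ 2) ^ 2
          - 2 * c * (q 0 ^ 2 + q 1 ^ 2 + q 2 ^ 2 + q 3 ^ 2) ^ 2) p ≠ 0 :=
  gradient_ne_zero_on_bounded_component_general c hc p h0 h1
end
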